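/- The function f(z) = sin(az)·e^{αz² + β} (for any a, α, β ∈ ℂ) satisfies the sigma-function identity for all x, y, z, w ∈ ℂ. -/

import Mathlib

/-! The product-to-sum formula `2 sin A sin B = cos (A - B) - cos (A + B)`, applied to the pairs
`{x, y}, {z, w}` and to the corresponding pairs of half-sums, turns the sine identity into a polynomial
identity in `cos (x ± y)` and `cos (z ± w)`. The Gaussian factor `exp (α u ^ 2 + β)` contributes the
same product to all three terms, because each group of four half-sums has the same sum of squares as
`x, y, z, w` (parallelogram law). -/

open Complex

def SigmaIdentity (f : ℂ → ℂ) : Prop :=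
  ∀ x y z w : ℂ,
    f x * f y * f z * f w -
      f ((x+y+z-w)/2) * f ((x+y-z+w)/2) * f ((x-y+z+w)/2) * f ((-x+y+z+w)/2) -
      f ((x+y+z+w)/2) * f ((x+y-z-w)/2) * f ((x-y+z-w)/2) * f ((x-y-z+w)/2) = 0

theorem Complex.sin_mul_sin_of_sub_of_add {A B u v : ℂ} (hu : A - B = u) (hv : A + B = v) :
    sin A * sin B = (cos u - cos v) / 2 := by
  rw [← hu, ← hv, cos_sub, cos_add]
  ring

theorem sigmaIdentity_sin : SigmaIdentity sin := by
  intro x y z w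
  have hxy : sin x * sin y = (cos (x - y) - cos (x + y)) / 2 :=
    sin_mul_sin_of_sub_of_add rfl rfl
  have hzw : sin z * sin w = (cos (z - w) - cos (z + w)) / 2 :=
    sin_mul_sin_of_sub_of_add rfl rfl
  have h₁ : sin ((x+y+z-w)/2) * sin ((x+y-z+w)/2) = (cos (z - w) - cos (x + y)) / 2 :=
    sin_mul_sin_of_sub_of_add (by ring) (by ring)
  have h₂ : sin ((x-y+z+w)/2) * sin ((-x+y+z+w)/2) = (cos (x - y) - cos (z + w)) / 2 :=
    sin_mul_sin_of_sub_of_add (by ring) (by ring)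
  have h₃ : sin ((x+y+z+w)/2) * sin ((x+y-z-w)/2) = (cos (z + w) - cos (x + y)) / 2 :=
    sin_mul_sin_of_sub_of_add (by ring) (by ring)
  have h₄ : sin ((x-y+z-w)/2) * sin ((x-y-z+w)/2) = (cos (z - w) - cos (x - y)) / 2 :=
    sin_mul_sin_of_sub_of_add (by ring) (by ring)
  simp only [mul_assoc (sin _ * sin _)]
  rw [hxy, hzw, h₁, h₂, h₃, h₄]
  ring

theorem SigmaIdentity.comp_mul {f : ℂ → ℂ} (hf : SigmaIdentity f) (a : ℂ) :
    SigmaIdentity fun u => f (a * u) := by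
  intro x y z w
  dsimp only
  convert hf (a * x) (a * y) (a * z) (a * w) using 7 <;> ring

theorem exp_quadratic_mul_four (α β p q r s : ℂ) :
    exp (α * p ^ 2 + β) * exp (α * q ^ 2 + β) * exp (α * r ^ 2 + β) * exp (α * s ^ 2 + β) =
      exp (α * (p ^ 2 + q ^ 2 + r ^ 2 + s ^ 2) + 4 * β) := by
  simp only [← exp_add]
  ring_nf

theorem half_sums_sq_sum₁ (x y z w : ℂ) :
    ((x+y+z-w)/2) ^ 2 + ((x+y-z+w)/2) ^ 2 + ((x-y+z+w)/2) ^ 2 + ((-x+y+z+w)/2) ^ 2 =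
      x ^ 2 + y ^ 2 + z ^ 2 + w ^ 2 := by
  ring

theorem half_sums_sq_sum₂ (x y z w : ℂ) :
    ((x+y+z+w)/2) ^ 2 + ((x+y-z-w)/2) ^ 2 + ((x-y+z-w)/2) ^ 2 + ((x-y-z+w)/2) ^ 2 =
      x ^ 2 + y ^ 2 + z ^ 2 + w ^ 2 := by
  ring

theorem SigmaIdentity.mul_exp_quadratic {f : ℂ → ℂ} (hf : SigmaIdentity f) (α β : ℂ) :
    SigmaIdentity fun u => f u * exp (α * u ^ 2 + β) := by
  intro x y z w
  have regroup : ∀ p q r s : ℂ,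
      f p * exp (α * p ^ 2 + β) * (f q * exp (α * q ^ 2 + β)) * (f r * exp (α * r ^ 2 + β)) *
          (f s * exp (α * s ^ 2 + β)) =
        f p * f q * f r * f s * exp (α * (p ^ 2 + q ^ 2 + r ^ 2 + s ^ 2) + 4 * β) := by
    intro p q r s
    rw [← exp_quadratic_mul_four]
    ring
  simp only [regroup, half_sums_sq_sum₁, half_sums_sq_sum₂]
  rw [← sub_mul, ← sub_mul, hf x y z w, zero_mul]

theorem stmt_16 (a α β : ℂ) :
    ∀ x y z w : ℂ,
      (fun u => sin (a * u) * exp (α * u ^ 2 + β)) x *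
        (fun u => sin (a * u) * exp (α * u ^ 2 + β)) y *
        (fun u => sin (a * u) * exp (α * u ^ 2 + β)) z *
        (fun u => sin (a * u) * exp (α * u ^ 2 + β)) w -
      (fun u => sin (a * u) * exp (α * u ^ 2 + β)) ((x+y+z-w)/2) *
        (fun u => sin (a * u) * exp (α * u ^ 2 + β)) ((x+y-z+w)/2) *
        (fun u => sin (a * u) * exp (α * u ^ 2 + β)) ((x-y+z+w)/2) *
        (fun u => sin (a * u) * exp (α * u ^ 2 + β)) ((-x+y+z+w)/2) -
      (fun u => sin (a * u) * exp (α * u ^ 2 + β)) ((x+y+z+w)/2) *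
        (fun u => sin (a * u) * exp (α * u ^ 2 + β)) ((x+y-z-w)/2) *
        (fun u => sin (a * u) * exp (α * u ^ 2 + β)) ((x-y+z-w)/2) *
        (fun u => sin (a * u) * exp (α * u ^ 2 + β)) ((x-y-z+w)/2) = 0 :=
  (sigmaIdentity_sin.comp_mul a).mul_exp_quadratic α β
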